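/- arXiv:2012.14323 — 5 statements merged into one kernel-verified Lean document; each statement's English description precedes it below -/
import Mathlib

section
/- Let T be a positive integer, let s_1,…,s_T > 0, let μ_1,…,μ_T > 0, and let G > 0. Define α = Σ_{j=1}^T √(μ_j s_j) and β = G + Σ_{j=1}^T s_j, and set λ*_j = (β/α)·√(μ_j s_j) − s_j for each j. If λ*_j ≥ 0 for every j, then λ* is a feasible point (i.e., λ*_j ≥ 0 for all j and Σ_{j=1}^T λ*_j ≤ G) and it maximizes Φ(λ) = Σ_{j=1}^T μ_j·λ_j/(λ_j + s_j) over all λ ∈ ℝ^T with λ_j ≥ 0 for all j and Σ_{j=1}^T λ_j ≤ G. -/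
/-!
Writing `x_j = λ_j + s_j` and `a_j = √(μ_j s_j)`, the objective is
`Φ(λ) = Σ_j μ_j - Σ_j a_j² / x_j`, so maximizing `Φ` means minimizing `Σ_j a_j² / x_j` subject
to `Σ_j x_j ≤ β`. By Cauchy–Schwarz (Sedrakyan's form) this sum is at least `(Σ_j a_j)² / β`,
with equality when `x` is proportional to `a` and exhausts the budget, which is exactly `λ*`.
-/

open Finset Real

lemma mul_div_add_eq_sub_mul_div {μ x s : ℝ} (h : x + s ≠ 0) :
    μ * x / (x + s) = μ - μ * s / (x + s) := by
  field_simp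
  ring

section Sedrakyan

variable {ι : Type*} [Fintype ι]

lemma sum_sq_div_eq_sq_sum_div_of_eq_mul {a y : ι → ℝ} {c : ℝ} (hy : ∀ i, y i = c * a i) :
    ∑ i, a i ^ 2 / y i = (∑ i, a i) ^ 2 / ∑ i, y i := by
  have hterm : ∀ i, a i ^ 2 / y i = a i / c := fun i => by
    rcases eq_or_ne (a i) 0 with ha | ha
    · simp [ha]
    · rw [hy i, sq, mul_comm c, mul_div_mul_left _ _ ha]
  rw [sum_congr rfl fun i _ => hterm i, ← sum_div]
  simp only [hy, ← mul_sum]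
  rcases eq_or_ne (∑ i, a i) 0 with ha | ha
  · simp [ha]
  · rw [sq, mul_comm c, mul_div_mul_left _ _ ha]

theorem sum_sq_div_le_of_eq_mul [Nonempty ι] {a x y : ι → ℝ} {c : ℝ}
    (hy : ∀ i, y i = c * a i) (hx : ∀ i, 0 < x i) (hxy : ∑ i, x i ≤ ∑ i, y i) :
    ∑ i, a i ^ 2 / y i ≤ ∑ i, a i ^ 2 / x i :=
  calc ∑ i, a i ^ 2 / y i = (∑ i, a i) ^ 2 / ∑ i, y i := sum_sq_div_eq_sq_sum_div_of_eq_mul hy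
    _ ≤ (∑ i, a i) ^ 2 / ∑ i, x i :=
      div_le_div_of_nonneg_left (sq_nonneg _) (sum_pos (fun i _ => hx i) univ_nonempty) hxy
    _ ≤ ∑ i, a i ^ 2 / x i := sq_sum_div_le_sum_sq_div univ a fun i _ => hx i

end Sedrakyan

theorem stmt0_general (T : ℕ) (hT : 0 < T) (s μ : Fin T → ℝ)
    (hs : ∀ j, 0 < s j) (hμ : ∀ j, 0 < μ j) (G : ℝ)
    (α β : ℝ) (hα : α = ∑ j, Real.sqrt (μ j * s j)) (hβ : β = G + ∑ j, s j)
    (lam : Fin T → ℝ) (hlam : ∀ j, lam j = (β / α) * Real.sqrt (μ j * s j) - s j)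
    (hpos : ∀ j, 0 ≤ lam j) :
    ((∀ j, 0 ≤ lam j) ∧ (∑ j, lam j) ≤ G) ∧
    ∀ l : Fin T → ℝ, (∀ j, 0 ≤ l j) → (∑ j, l j) ≤ G →
      (∑ j, μ j * l j / (l j + s j)) ≤ (∑ j, μ j * lam j / (lam j + s j)) := by
  have : Nonempty (Fin T) := Fin.pos_iff_nonempty.mp hT
  set a : Fin T → ℝ := fun j => √(μ j * s j)
  have ha_sq (j : Fin T) : a j ^ 2 = μ j * s j := sq_sqrt (mul_pos (hμ j) (hs j)).le
  have hα_pos : 0 < α := hα ▸ sum_pos (fun j _ => sqrt_pos.mpr (mul_pos (hμ j) (hs j)))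
    univ_nonempty
  have hlam_add (j : Fin T) : lam j + s j = β / α * a j := by rw [hlam j]; ring
  have hsum_lam : ∑ j, lam j = G := by
    have : ∑ j, (lam j + s j) = β := by
      simp only [hlam_add, ← mul_sum, ← hα, div_mul_cancel₀ _ hα_pos.ne']
    rw [sum_add_distrib, hβ] at this
    linarith
  have hΦ (v : Fin T → ℝ) (hv : ∀ j, 0 ≤ v j) :
      ∑ j, μ j * v j / (v j + s j) = ∑ j, μ j - ∑ j, a j ^ 2 / (v j + s j) := by
    rw [← sum_sub_distrib]
    exact sum_congr rfl fun j _ => by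
      rw [ha_sq, mul_div_add_eq_sub_mul_div (add_pos_of_nonneg_of_pos (hv j) (hs j)).ne']
  refine ⟨⟨hpos, hsum_lam.le⟩, fun l hl hl_sum => ?_⟩
  have hbudget : ∑ j, (l j + s j) ≤ ∑ j, (lam j + s j) := by
    rw [sum_add_distrib, sum_add_distrib, hsum_lam]
    linarith
  rw [hΦ l hl, hΦ lam hpos]
  exact sub_le_sub_left (sum_sq_div_le_of_eq_mul hlam_add
    (fun j => add_pos_of_nonneg_of_pos (hl j) (hs j)) hbudget) _

/-- The water-filling allocation `λ*_j = (β/α)·√(μ_j s_j) − s_j` (when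
nonnegative) is feasible and maximizes `Φ(λ) = Σ_j μ_j·λ_j/(λ_j + s_j)` over the set
`{λ : λ_j ≥ 0, Σ_j λ_j ≤ G}`. -/
theorem stmt0 (T : ℕ) (hT : 0 < T) (s μ : Fin T → ℝ)
    (hs : ∀ j, 0 < s j) (hμ : ∀ j, 0 < μ j) (G : ℝ) (hG : 0 < G)
    (α β : ℝ) (hα : α = ∑ j, Real.sqrt (μ j * s j)) (hβ : β = G + ∑ j, s j)
    (lam : Fin T → ℝ) (hlam : ∀ j, lam j = (β / α) * Real.sqrt (μ j * s j) - s j)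
    (hpos : ∀ j, 0 ≤ lam j) :
    ((∀ j, 0 ≤ lam j) ∧ (∑ j, lam j) ≤ G) ∧
    ∀ l : Fin T → ℝ, (∀ j, 0 ≤ l j) → (∑ j, l j) ≤ G →
      (∑ j, μ j * l j / (l j + s j)) ≤ (∑ j, μ j * lam j / (lam j + s j)) :=
  stmt0_general T hT s μ hs hμ G α β hα hβ lam hlam hpos
end

section
/- Let T be a positive integer, let s_1,…,s_T > 0, let μ_1,…,μ_T > 0, and let G > 0. Define α = Σ_{j=1}^T √(μ_j s_j) and β = G + Σ_{j=1}^T s_j. Then for every λ ∈ ℝ^T with λ_j ≥ 0 for all j and Σ_{j=1}^T λ_j ≤ G, one has Σ_{j=1}^T μ_j·λ_j/(λ_j + s_j) ≤ Σ_{j=1}^T μ_j − α²/β. -/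
open Finset Real

/-!
Writing `μ λ / (λ + s) = μ - μ s / (λ + s)`, the claim becomes a lower bound for
`Σ_j μ_j s_j / (λ_j + s_j)`. By Cauchy–Schwarz with the weights `λ_j + s_j`,
`(Σ_j √(μ_j s_j))² ≤ (Σ_j μ_j s_j / (λ_j + s_j)) · Σ_j (λ_j + s_j)`,
and the budget constraint gives `Σ_j (λ_j + s_j) ≤ G + Σ_j s_j`.
-/

lemma mul_div_add_eq_sub_mul_div_add {μ l s : ℝ} (h : l + s ≠ 0) :
    μ * l / (l + s) = μ - μ * s / (l + s) := by
  field_simp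
  ring

lemma sq_sum_sqrt_le_sum_div_mul_sum {ι : Type*} (t : Finset ι) {a d : ι → ℝ}
    (ha : ∀ i ∈ t, 0 ≤ a i) (hd : ∀ i ∈ t, 0 < d i) :
    (∑ i ∈ t, √(a i)) ^ 2 ≤ (∑ i ∈ t, a i / d i) * ∑ i ∈ t, d i :=
  sum_sq_le_sum_mul_sum_of_sq_le_mul t
    (fun i hi => div_nonneg (ha i hi) (hd i hi).le) (fun i hi => (hd i hi).le)
    (fun i hi => by rw [sq_sqrt (ha i hi), div_mul_cancel₀ _ (hd i hi).ne'])

lemma sum_mul_div_add_le {ι : Type*} (t : Finset ι) {μ s l : ι → ℝ} {B : ℝ}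
    (hμ : ∀ i ∈ t, 0 ≤ μ i) (hs : ∀ i ∈ t, 0 < s i) (hl : ∀ i ∈ t, 0 ≤ l i)
    (hB : ∑ i ∈ t, (l i + s i) ≤ B) :
    ∑ i ∈ t, μ i * l i / (l i + s i) ≤
      ∑ i ∈ t, μ i - (∑ i ∈ t, √(μ i * s i)) ^ 2 / B := by
  have hpos : ∀ i ∈ t, 0 < l i + s i := fun i hi => add_pos_of_nonneg_of_pos (hl i hi) (hs i hi)
  have hμs : ∀ i ∈ t, 0 ≤ μ i * s i := fun i hi => mul_nonneg (hμ i hi) (hs i hi).le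
  set Q := ∑ i ∈ t, μ i * s i / (l i + s i)
  have hQ : 0 ≤ Q := sum_nonneg fun i hi => div_nonneg (hμs i hi) (hpos i hi).le
  have hsplit : ∑ i ∈ t, μ i * l i / (l i + s i) = ∑ i ∈ t, μ i - Q := by
    rw [← sum_sub_distrib]
    exact sum_congr rfl fun i hi => mul_div_add_eq_sub_mul_div_add (hpos i hi).ne'
  have hcs : (∑ i ∈ t, √(μ i * s i)) ^ 2 ≤ Q * B :=
    (sq_sum_sqrt_le_sum_div_mul_sum t hμs hpos).trans (mul_le_mul_of_nonneg_left hB hQ)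
  have hB₀ : 0 ≤ B := (sum_nonneg fun i hi => (hpos i hi).le).trans hB
  rw [hsplit]
  linarith [div_le_of_le_mul₀ hB₀ hQ hcs]

theorem stmt1_general (T : ℕ) (s μ : Fin T → ℝ)
    (hs : ∀ j, 0 < s j) (hμ : ∀ j, 0 < μ j) (G : ℝ)
    (α β : ℝ) (hα : α = ∑ j, Real.sqrt (μ j * s j)) (hβ : β = G + ∑ j, s j)
    (l : Fin T → ℝ) (hl : ∀ j, 0 ≤ l j) (hsum : (∑ j, l j) ≤ G) :
    (∑ j, μ j * l j / (l j + s j)) ≤ (∑ j, μ j) - α ^ 2 / β := by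
  subst hα hβ
  refine sum_mul_div_add_le univ (fun j _ => (hμ j).le) (fun j _ => hs j) (fun j _ => hl j) ?_
  rw [sum_add_distrib]
  linarith

/-- For every feasible allocation `λ` (componentwise nonnegative with
`Σ_j λ_j ≤ G`), the total freshness satisfies `Σ_j μ_j·λ_j/(λ_j+s_j) ≤ Σ_j μ_j − α²/β`,
where `α = Σ_j √(μ_j s_j)` and `β = G + Σ_j s_j`. -/
theorem stmt1 (T : ℕ) (hT : 0 < T) (s μ : Fin T → ℝ)
    (hs : ∀ j, 0 < s j) (hμ : ∀ j, 0 < μ j) (G : ℝ) (hG : 0 < G)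
    (α β : ℝ) (hα : α = ∑ j, Real.sqrt (μ j * s j)) (hβ : β = G + ∑ j, s j)
    (l : Fin T → ℝ) (hl : ∀ j, 0 ≤ l j) (hsum : (∑ j, l j) ≤ G) :
    (∑ j, μ j * l j / (l j + s j)) ≤ (∑ j, μ j) - α ^ 2 / β :=
  stmt1_general T s μ hs hμ G α β hα hβ l hl hsum
end

section
/- Let T be a positive integer, let s_1,…,s_T > 0, let μ_1,…,μ_T > 0, and let G > 0. Suppose λ* ∈ ℝ^T and δ > 0 satisfy λ*_j = max{ √(μ_j s_j / δ) − s_j , 0 } for every j and Σ_{j=1}^T λ*_j = G. Then λ* maximizes Φ(λ) = Σ_{j=1}^T μ_j·λ_j/(λ_j + s_j) over all λ ∈ ℝ^T with λ_j ≥ 0 for all j and Σ_{j=1}^T λ_j ≤ G. -/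
/-!
Weak Lagrangian duality: for feasible `l`, `Φ(l) ≤ Φ(l) - δ (Σ l - G)`, and the Lagrangian
`Σ_j (μ_j x_j / (x_j + s_j) - δ x_j)` separates over the files; since `Σ λ*_j = G` it agrees with
`Φ` at `λ*`. With `u = x + s` and `r = √(μ s / δ)`, a summand equals `μ + δ s - δ (r ^ 2 / u + u)`,
and on `u ≥ s` the function `r ^ 2 / u + u` is minimal at `u = max r s`, i.e. at `x = λ*_j`.
-/

open Finset Real

theorem sum_le_sum_of_forall_sub_mul_le {ι : Type*} (t : Finset ι) (f : ι → ℝ → ℝ)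
    {δ G : ℝ} (hδ : 0 ≤ δ) (x : ι → ℝ) (hx : ∑ j ∈ t, x j = G)
    (y : ι → ℝ) (hy : ∀ j ∈ t, f j (y j) - δ * y j ≤ f j (x j) - δ * x j)
    (hyG : ∑ j ∈ t, y j ≤ G) :
    ∑ j ∈ t, f j (y j) ≤ ∑ j ∈ t, f j (x j) := by
  have hsum := sum_le_sum hy
  rw [sum_sub_distrib, sum_sub_distrib, ← mul_sum, ← mul_sum, hx] at hsum
  linarith [mul_le_mul_of_nonneg_left hyG hδ]

theorem sq_div_max_add_max_le {r s u : ℝ} (hr : 0 ≤ r) (hs : 0 < s) (hsu : s ≤ u) :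
    r ^ 2 / max r s + max r s ≤ r ^ 2 / u + u := by
  have hu : 0 < u := hs.trans_le hsu
  rcases le_total r s with hrs | hsr
  · rw [max_eq_right hrs, div_add' _ _ _ hs.ne', div_add' _ _ _ hu.ne',
      div_le_div_iff₀ hs hu]
    nlinarith [mul_le_mul hrs hrs hr hs.le, mul_nonneg (sub_nonneg.2 hsu) hs.le]
  · have hr0 : 0 < r := hs.trans_le hsr
    have hgap : r ^ 2 / r + r = r ^ 2 / u + u - (u - r) ^ 2 / u := by field_simp; ring
    rw [max_eq_left hsr, hgap, sub_le_self_iff]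
    positivity

theorem mul_div_add_sub_mul_eq {μ s δ r u : ℝ} (hμs : μ * s = δ * r ^ 2) (hu : u ≠ 0) :
    μ * (u - s) / u - δ * (u - s) = μ + δ * s - δ * (r ^ 2 / u + u) := by
  field_simp
  linear_combination (-1 : ℝ) * hμs

theorem mul_div_add_sub_mul_le_waterFilling {μ s δ x : ℝ} (hμ : 0 ≤ μ) (hs : 0 < s)
    (hδ : 0 < δ) (hx : 0 ≤ x) :
    μ * x / (x + s) - δ * x ≤
      μ * max (√(μ * s / δ) - s) 0 / (max (√(μ * s / δ) - s) 0 + s) -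
        δ * max (√(μ * s / δ) - s) 0 := by
  set r := √(μ * s / δ)
  have hμs : μ * s = δ * r ^ 2 := by
    rw [sq_sqrt (by positivity)]
    field_simp
  have hmax : max (r - s) 0 + s = max r s := by
    rw [← max_add_add_right, sub_add_cancel, zero_add]
  have hx' := mul_div_add_sub_mul_eq (u := x + s) hμs (by positivity)
  have hw := mul_div_add_sub_mul_eq (u := max r s) hμs (by positivity)
  rw [add_sub_cancel_right] at hx'
  rw [← hmax, add_sub_cancel_right, hmax] at hw
  rw [hx', hmax, hw]
  have := sq_div_max_add_max_le (sqrt_nonneg (μ * s / δ)) hs (le_add_of_nonneg_left hx)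
  linarith [mul_le_mul_of_nonneg_left this hδ.le]

theorem stmt7_general (T : ℕ) (s μ : Fin T → ℝ)
    (hs : ∀ j, 0 < s j) (hμ : ∀ j, 0 < μ j) (G : ℝ)
    (lam : Fin T → ℝ) (δ : ℝ) (hδ : 0 < δ)
    (hlam : ∀ j, lam j = max (Real.sqrt (μ j * s j / δ) - s j) 0)
    (hsum : (∑ j, lam j) = G) :
    ∀ l : Fin T → ℝ, (∀ j, 0 ≤ l j) → (∑ j, l j) ≤ G →
      (∑ j, μ j * l j / (l j + s j)) ≤ (∑ j, μ j * lam j / (lam j + s j)) := by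
  intro l hl hlG
  refine sum_le_sum_of_forall_sub_mul_le univ (fun j x => μ j * x / (x + s j)) hδ.le
    lam hsum l (fun j _ => ?_) hlG
  rw [hlam j]
  exact mul_div_add_sub_mul_le_waterFilling (hμ j).le (hs j) hδ (hl j)

/-- If `λ*` and a multiplier `δ > 0` satisfy the KKT water-filling form
`λ*_j = max{√(μ_j s_j/δ) − s_j, 0}` for all `j` together with `Σ_j λ*_j = G`, then `λ*`
maximizes `Φ(λ) = Σ_j μ_j·λ_j/(λ_j+s_j)` over `{λ : λ_j ≥ 0, Σ_j λ_j ≤ G}`. -/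
theorem stmt7 (T : ℕ) (hT : 0 < T) (s μ : Fin T → ℝ)
    (hs : ∀ j, 0 < s j) (hμ : ∀ j, 0 < μ j) (G : ℝ) (hG : 0 < G)
    (lam : Fin T → ℝ) (δ : ℝ) (hδ : 0 < δ)
    (hlam : ∀ j, lam j = max (Real.sqrt (μ j * s j / δ) - s j) 0)
    (hsum : (∑ j, lam j) = G) :
    ∀ l : Fin T → ℝ, (∀ j, 0 ≤ l j) → (∑ j, l j) ≤ G →
      (∑ j, μ j * l j / (l j + s j)) ≤ (∑ j, μ j * lam j / (lam j + s j)) :=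
  stmt7_general T s μ hs hμ G lam δ hδ hlam hsum
end

section
/- Let T be a positive integer, let s_1,…,s_T > 0, let μ_1,…,μ_T > 0, and let G > 0. Define α = Σ_{j=1}^T √(μ_j s_j) and β = G + Σ_{j=1}^T s_j. Then for every λ ∈ ℝ^T with λ_j ≥ 0 for all j and Σ_{j=1}^T λ_j ≤ G, one has Σ_{j=1}^T μ_j s_j/(λ_j + s_j) ≥ α²/β. -/
open Finset Real

/-! Cauchy–Schwarz in Engel form, `(∑ √(μ_j s_j))² / ∑ (λ_j + s_j) ≤ ∑ μ_j s_j / (λ_j + s_j)`,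
and the budget constraint gives `∑ (λ_j + s_j) ≤ G + ∑ s_j = β`. -/

theorem sq_sum_sqrt_div_sum_le_sum_div {ι : Type*} (t : Finset ι) {a w : ι → ℝ}
    (ha : ∀ i ∈ t, 0 ≤ a i) (hw : ∀ i ∈ t, 0 < w i) :
    (∑ i ∈ t, √(a i)) ^ 2 / ∑ i ∈ t, w i ≤ ∑ i ∈ t, a i / w i := by
  calc (∑ i ∈ t, √(a i)) ^ 2 / ∑ i ∈ t, w i ≤ ∑ i ∈ t, √(a i) ^ 2 / w i :=
        sq_sum_div_le_sum_sq_div t _ hw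
    _ = ∑ i ∈ t, a i / w i := sum_congr rfl fun i hi => by rw [sq_sqrt (ha i hi)]

theorem stmt8_general (T : ℕ) (hT : 0 < T) (s μ : Fin T → ℝ)
    (hs : ∀ j, 0 < s j) (hμ : ∀ j, 0 < μ j) (G : ℝ)
    (α β : ℝ) (hα : α = ∑ j, Real.sqrt (μ j * s j)) (hβ : β = G + ∑ j, s j)
    (l : Fin T → ℝ) (hl : ∀ j, 0 ≤ l j) (hsum : (∑ j, l j) ≤ G) :
    α ^ 2 / β ≤ ∑ j, μ j * s j / (l j + s j) := by
  have hw : ∀ j ∈ univ, 0 < l j + s j := fun j _ => add_pos_of_nonneg_of_pos (hl j) (hs j)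
  have hW : 0 < ∑ j, (l j + s j) := sum_pos hw (univ_nonempty_iff.2 ⟨⟨0, hT⟩⟩)
  have hWβ : ∑ j, (l j + s j) ≤ β := by
    rw [hβ, sum_add_distrib]
    linarith
  calc α ^ 2 / β ≤ α ^ 2 / ∑ j, (l j + s j) := div_le_div_of_nonneg_left (sq_nonneg α) hW hWβ
    _ ≤ ∑ j, μ j * s j / (l j + s j) := hα ▸ sq_sum_sqrt_div_sum_le_sum_div univ
        (fun j _ => (mul_pos (hμ j) (hs j)).le) hw

/-- For every feasible allocation `λ` (componentwise nonnegative with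
`Σ_j λ_j ≤ G`), the total freshness loss satisfies `Σ_j μ_j s_j/(λ_j+s_j) ≥ α²/β`, where
`α = Σ_j √(μ_j s_j)` and `β = G + Σ_j s_j`. -/
theorem stmt8 (T : ℕ) (hT : 0 < T) (s μ : Fin T → ℝ)
    (hs : ∀ j, 0 < s j) (hμ : ∀ j, 0 < μ j) (G : ℝ) (hG : 0 < G)
    (α β : ℝ) (hα : α = ∑ j, Real.sqrt (μ j * s j)) (hβ : β = G + ∑ j, s j)
    (l : Fin T → ℝ) (hl : ∀ j, 0 ≤ l j) (hsum : (∑ j, l j) ≤ G) :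
    α ^ 2 / β ≤ ∑ j, μ j * s j / (l j + s j) :=
  stmt8_general T hT s μ hs hμ G α β hα hβ l hl hsum
end

section
/- Let T be a positive integer, let s_1,…,s_T > 0, let μ_1,…,μ_T > 0, and let G > 0. If λ ∈ ℝ^T with λ_j ≥ 0 for all j and Σ_{j=1}^T λ_j = G maximizes Φ(λ) = Σ_{j=1}^T μ_j·λ_j/(λ_j + s_j) over the feasible set {λ : λ_j ≥ 0, Σ_j λ_j ≤ G}, and if indices i, j satisfy λ_i > 0 and μ_j/s_j ≤ μ_i s_i/(λ_i + s_i)², then λ_j = 0 whenever μ_j s_j/s_j² < μ_i s_i/(λ_i+s_i)²; equivalently, at an optimal allocation, any file whose marginal freshness gain at rate zero, μ_j/s_j, is strictly smaller than the marginal freshness gain μ_i s_i/(λ_i+s_i)² of some file receiving a positive rate must itself receive rate zero. -/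
open Finset Real

/-! Shifting a small rate `t` from a file `j` with `λ_j > 0` to a file `i` keeps the allocation
feasible, so at an optimum the one-sided derivative in `t`, namely
`μ_i s_i/(λ_i+s_i)² - μ_j s_j/(λ_j+s_j)²`, is nonpositive. Since the marginal gain
`μ_j s_j/(x+s_j)²` decreases in `x ≥ 0`, this gives
`μ_i s_i/(λ_i+s_i)² ≤ μ_j s_j/(λ_j+s_j)² ≤ μ_j/s_j`, which the strict inequality rules out. -/

theorem Finset.sum_apply_update {ι α M : Type*} [Fintype ι] [DecidableEq ι] [AddCommGroup M]
    (F : ι → α → M) (l : ι → α) (i : ι) (x : α) :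
    ∑ k, F k (Function.update l i x k) = ∑ k, F k (l k) + (F i x - F i (l i)) := by
  simp_rw [Function.apply_update F]
  rw [Finset.sum_update_of_mem (mem_univ i), ← Finset.add_sum_erase _ _ (mem_univ i),
    Finset.sdiff_singleton_eq_erase]
  abel

theorem HasDerivWithinAt.nonpos_of_isMaxOn_Icc {h : ℝ → ℝ} {h' a b : ℝ} (hab : a < b)
    (hmax : IsMaxOn h (Set.Icc a b) a) (hd : HasDerivWithinAt h h' (Set.Icc a b) a) : h' ≤ 0 := by
  have hcone : b - a ∈ posTangentConeAt (Set.Icc a b) a :=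
    mem_posTangentConeAt_of_segment_subset (by rw [add_sub_cancel, segment_eq_Icc hab.le])
  have := hmax.localize.hasFDerivWithinAt_nonpos hd.hasFDerivWithinAt hcone
  rw [ContinuousLinearMap.toSpanSingleton_apply, smul_eq_mul] at this
  nlinarith

theorem hasDerivAt_mul_div_add (μ s x : ℝ) (hx : x + s ≠ 0) :
    HasDerivAt (fun x => μ * x / (x + s)) (μ * s / (x + s) ^ 2) x :=
  (((hasDerivAt_id' x).const_mul μ).fun_div ((hasDerivAt_id' x).add_const s) hx).congr_deriv
    (by ring)

theorem marginal_le_of_budget_maximizer {ι : Type*} [Fintype ι] [DecidableEq ι] (F : ι → ℝ → ℝ)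
    (G : ℝ) (lam : ι → ℝ) (hpos : ∀ k, 0 ≤ lam k) (hsum : ∑ k, lam k ≤ G)
    (hmax : ∀ l : ι → ℝ, (∀ k, 0 ≤ l k) → ∑ k, l k ≤ G → ∑ k, F k (l k) ≤ ∑ k, F k (lam k))
    {i j : ι} (hj : 0 < lam j) {di dj : ℝ} (hdi : HasDerivAt (F i) di (lam i))
    (hdj : HasDerivAt (F j) dj (lam j)) : di ≤ dj := by
  rcases eq_or_ne i j with rfl | hij
  · exact (hdi.unique hdj).le
  set shift : ℝ → ι → ℝ := fun t => Function.update (Function.update lam i (lam i + t)) j (lam j - t)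
  have sum_shift : ∀ (f : ι → ℝ → ℝ) t, ∑ k, f k (shift t k) =
      ∑ k, f k (lam k) + (f i (lam i + t) - f i (lam i)) + (f j (lam j - t) - f j (lam j)) := by
    intro f t
    simp only [shift, Finset.sum_apply_update, Function.update_of_ne hij.symm]
  have hshift : IsMaxOn (fun t => F i (lam i + t) + F j (lam j - t)) (Set.Icc 0 (lam j)) 0 := by
    rintro t ⟨ht0, htj⟩
    have feasible : ∀ k, 0 ≤ shift t k := by
      intro k
      simp only [shift, Function.update_apply]
      split_ifs <;> linarith [hpos k, hpos i]
    have budget : ∑ k, shift t k ≤ G := by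
      have := sum_shift (fun _ x => x) t
      linarith
    have := hmax _ feasible budget
    rw [sum_shift] at this
    simp only [Set.mem_ofPred_eq, add_zero, sub_zero]
    linarith
  have hderiv : HasDerivAt (fun t => F i (lam i + t) + F j (lam j - t)) (di + -dj) 0 :=
    (HasDerivAt.comp_const_add (lam i) 0 (by simpa using hdi)).add
      (HasDerivAt.comp_const_sub (lam j) 0 (by simpa using hdj))
  have := hderiv.hasDerivWithinAt.nonpos_of_isMaxOn_Icc hj hshift
  linarith

theorem stmt18_general (T : ℕ) (s μ : Fin T → ℝ)
    (hs : ∀ j, 0 < s j) (hμ : ∀ j, 0 < μ j) (G : ℝ)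
    (lam : Fin T → ℝ) (hpos : ∀ j, 0 ≤ lam j) (hsum : (∑ j, lam j) = G)
    (hmax : ∀ l : Fin T → ℝ, (∀ j, 0 ≤ l j) → (∑ j, l j) ≤ G →
      (∑ j, μ j * l j / (l j + s j)) ≤ (∑ j, μ j * lam j / (lam j + s j)))
    (i j : Fin T)
    (hlt : μ j * s j / (s j) ^ 2 < μ i * s i / (lam i + s i) ^ 2) :
    lam j = 0 := by
  by_contra hj
  have hgain_le : μ i * s i / (lam i + s i) ^ 2 ≤ μ j * s j / (lam j + s j) ^ 2 :=
    marginal_le_of_budget_maximizer (fun k x => μ k * x / (x + s k)) G lam hpos hsum.le hmax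
      ((hpos j).lt_of_ne' hj)
      (hasDerivAt_mul_div_add _ _ _ (add_pos_of_nonneg_of_pos (hpos i) (hs i)).ne')
      (hasDerivAt_mul_div_add _ _ _ (add_pos_of_nonneg_of_pos (hpos j) (hs j)).ne')
  have hgain_anti : μ j * s j / (lam j + s j) ^ 2 ≤ μ j * s j / s j ^ 2 :=
    div_le_div_of_nonneg_left (mul_pos (hμ j) (hs j)).le (pow_pos (hs j) 2)
      (pow_le_pow_left₀ (hs j).le (le_add_of_nonneg_left (hpos j)) 2)
  linarith

/-- RUPA elimination step: Let `λ` be an optimal allocation with tight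
budget `Σ_j λ_j = G`. If `λ_i > 0` and the marginal freshness gain of file `j` at rate
zero, `μ_j/s_j = μ_j s_j/s_j²`, is at most — and in fact strictly smaller than — the
marginal freshness gain `μ_i s_i/(λ_i+s_i)²` of file `i`, then file `j` receives rate
zero: `λ_j = 0`. -/
theorem stmt18 (T : ℕ) (hT : 0 < T) (s μ : Fin T → ℝ)
    (hs : ∀ j, 0 < s j) (hμ : ∀ j, 0 < μ j) (G : ℝ) (hG : 0 < G)
    (lam : Fin T → ℝ) (hpos : ∀ j, 0 ≤ lam j) (hsum : (∑ j, lam j) = G)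
    (hmax : ∀ l : Fin T → ℝ, (∀ j, 0 ≤ l j) → (∑ j, l j) ≤ G →
      (∑ j, μ j * l j / (l j + s j)) ≤ (∑ j, μ j * lam j / (lam j + s j)))
    (i j : Fin T) (hi : 0 < lam i)
    (hle : μ j / s j ≤ μ i * s i / (lam i + s i) ^ 2)
    (hlt : μ j * s j / (s j) ^ 2 < μ i * s i / (lam i + s i) ^ 2) :
    lam j = 0 :=
  stmt18_general T s μ hs hμ G lam hpos hsum hmax i j hlt
end
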